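/- The subgroups of the alternating group A₄ on four letters fall into exactly five conjugacy classes: the trivial subgroup, the class of the three order-2 subgroups, the class of the four order-3 subgroups, the unique order-4 subgroup, and the whole group. -/

import Mathlib

open scoped Pointwise

/-! Conjugate subgroups have the same order, and in `A₄` the converse holds: subgroups of
order 3 or 4 are Sylow subgroups, hence conjugate, and a subgroup of order 2 is generated by an
involution, and all involutions of `A₄` are conjugate. So the conjugacy classes of subgroups
correspond to the orders of subgroups, which are the divisors of 12 other than 6: a subgroup of
order 6 would have index 2, hence contain the commutator subgroup, which is the Klein four-group. -/

namespace Subgroup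

variable {G : Type*} [Group G]

theorem commutator_le_of_index_eq_two {H : Subgroup G} (h : H.index = 2) :
    _root_.commutator G ≤ H := by
  rw [commutator_eq_closure, closure_le]
  rintro _ ⟨p, q, rfl⟩
  simp only [SetLike.mem_coe, commutatorElement_def, mul_mem_iff_of_index_two h, inv_mem_iff]
  tauto

theorem card_conjAct_smul (g : ConjAct G) (H : Subgroup G) :
    Nat.card (g • H : Subgroup G) = Nat.card H :=
  (Nat.card_congr (equivSMul g H).toEquiv).symm

theorem toConjAct_smul_zpowers (g x : G) :
    ConjAct.toConjAct g • zpowers x = zpowers (g * x * g⁻¹) :=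
  MonoidHom.map_zpowers _ _

theorem exists_conjAct_smul_eq_of_card_eq_prime {p : ℕ} [Fact p.Prime]
    (hconj : ∀ x y : G, orderOf x = p → orderOf y = p → IsConj x y)
    {H K : Subgroup G} (hH : Nat.card H = p) (hK : Nat.card K = p) :
    ∃ g : ConjAct G, g • H = K := by
  obtain ⟨x, rfl⟩ := H.isCyclic_iff_exists_zpowers_eq_top.1 (isCyclic_of_prime_card hH)
  obtain ⟨y, rfl⟩ := K.isCyclic_iff_exists_zpowers_eq_top.1 (isCyclic_of_prime_card hK)
  rw [Nat.card_zpowers] at hH hK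
  obtain ⟨g, hg⟩ := isConj_iff.1 (hconj x y hH hK)
  exact ⟨ConjAct.toConjAct g, by rw [toConjAct_smul_zpowers, hg]⟩

theorem exists_conjAct_smul_eq_of_card_eq_prime_pow [Finite G] {p n : ℕ} [Fact p.Prime]
    {H K : Subgroup G} (hH : Nat.card H = p ^ n) (hK : Nat.card K = p ^ n)
    (hp : ¬ p ^ (n + 1) ∣ Nat.card G) : ∃ g : ConjAct G, g • H = K := by
  have hindex {L : Subgroup G} (hL : Nat.card L = p ^ n) : ¬ p ∣ L.index := fun ⟨k, hk⟩ =>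
    hp ⟨k, by rw [← L.card_mul_index, hL, hk, pow_succ, mul_assoc]⟩
  obtain ⟨g, hg⟩ := MulAction.exists_smul_eq G ((IsPGroup.of_card hH).toSylow (hindex hH))
    ((IsPGroup.of_card hK).toSylow (hindex hK))
  exact ⟨ConjAct.toConjAct g, congrArg Sylow.toSubgroup hg⟩

theorem card_quotient_conjAct_eq_card_range_card
    (h : ∀ H K : Subgroup G, Nat.card H = Nat.card K → ∃ g : ConjAct G, g • H = K) :
    Nat.card (Quotient (MulAction.orbitRel (ConjAct G) (Subgroup G))) =
      Nat.card (Set.range fun H : Subgroup G => Nat.card H) := by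
  let card : Quotient (MulAction.orbitRel (ConjAct G) (Subgroup G)) → ℕ :=
    Quotient.lift (fun H => Nat.card H) fun _ _ ⟨g, hg⟩ => hg ▸ card_conjAct_smul g _
  have hinj : Function.Injective card := by
    rintro ⟨H⟩ ⟨K⟩ hHK
    obtain ⟨g, hg⟩ := h K H hHK.symm
    exact Quotient.sound ⟨g, hg⟩
  rw [← Nat.card_range_of_injective hinj, Set.range_quotient_lift (s := MulAction.orbitRel _ _)]

end Subgroup

local notation "A₄" => alternatingGroup (Fin 4)

namespace alternatingGroup

theorem card_fin_four : Nat.card A₄ = 12 :=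
  card_of_card_eq_four (Nat.card_fin 4)

theorem isConj_of_orderOf_eq_two_fin_four {x y : A₄} (hx : orderOf x = 2)
    (hy : orderOf y = 2) : IsConj x y := by
  rw [orderOf_eq_prime_iff] at hx hy
  rw [isConj_iff]
  revert x y
  decide

theorem card_subgroup_fin_four_ne_six (H : Subgroup A₄) : Nat.card H ≠ 6 := by
  intro h6
  have hindex : H.index = 2 := by
    have := H.card_mul_index
    rw [h6, card_fin_four] at this
    omega
  have hV : kleinFour (Fin 4) ≤ H := by
    rw [kleinFour_eq_commutator (Nat.card_fin 4)]
    exact Subgroup.commutator_le_of_index_eq_two hindex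
  have := Subgroup.card_dvd_of_le hV
  rw [kleinFour_card_of_card_eq_four (Nat.card_fin 4), h6] at this
  omega

theorem card_subgroup_fin_four_mem (H : Subgroup A₄) :
    Nat.card H ∈ ({1, 2, 3, 4, 12} : Set ℕ) := by
  have hdvd : Nat.card H ∈ Nat.divisors 12 :=
    Nat.mem_divisors.2 ⟨card_fin_four ▸ H.card_subgroup_dvd_card, by norm_num⟩
  have h6 := card_subgroup_fin_four_ne_six H
  rw [show Nat.divisors 12 = {1, 2, 3, 4, 6, 12} by decide] at hdvd
  simp only [Finset.mem_insert, Finset.mem_singleton] at hdvd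
  simp only [Set.mem_insert_iff, Set.mem_singleton_iff]
  omega

theorem range_card_subgroup_fin_four :
    Set.range (fun H : Subgroup A₄ => Nat.card H) = {1, 2, 3, 4, 12} := by
  refine subset_antisymm (Set.range_subset_iff.2 card_subgroup_fin_four_mem) ?_
  have hpow (p n : ℕ) [Fact p.Prime] (hdvd : p ^ n ∣ 12) :
      p ^ n ∈ Set.range (fun H : Subgroup A₄ => Nat.card H) :=
    Sylow.exists_subgroup_card_pow_prime p (card_fin_four ▸ hdvd)
  simp only [Set.insert_subset_iff, Set.singleton_subset_iff]
  exact ⟨hpow 2 0 (by norm_num), hpow 2 1 (by norm_num), hpow 3 1 (by norm_num),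
    hpow 2 2 (by norm_num), ⟨⊤, Subgroup.card_top.trans card_fin_four⟩⟩

theorem exists_conjAct_smul_eq_of_card_eq_fin_four {H K : Subgroup A₄}
    (hHK : Nat.card H = Nat.card K) : ∃ g : ConjAct A₄, g • H = K := by
  rcases card_subgroup_fin_four_mem H with h | h | h | h | h
  · refine ⟨1, ?_⟩
    rw [one_smul, Subgroup.card_eq_one.1 h, Subgroup.card_eq_one.1 (hHK.symm.trans h)]
  · exact Subgroup.exists_conjAct_smul_eq_of_card_eq_prime
      (fun _ _ => isConj_of_orderOf_eq_two_fin_four) h (hHK.symm.trans h)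
  · exact Subgroup.exists_conjAct_smul_eq_of_card_eq_prime_pow (p := 3) (n := 1)
      h (hHK.symm.trans h) (by rw [card_fin_four]; decide)
  · exact Subgroup.exists_conjAct_smul_eq_of_card_eq_prime_pow (p := 2) (n := 2)
      h (hHK.symm.trans h) (by rw [card_fin_four]; decide)
  · replace h : Nat.card H = Nat.card A₄ := (Set.mem_singleton_iff.1 h).trans card_fin_four.symm
    refine ⟨1, ?_⟩
    rw [one_smul, (Subgroup.card_eq_iff_eq_top H).1 h,
      (Subgroup.card_eq_iff_eq_top K).1 (hHK.symm.trans h)]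

end alternatingGroup

/-- The subgroups of the alternating group `A₄` fall into exactly five conjugacy classes
(orbits of the conjugation action of `A₄` on its subgroups): the trivial subgroup, the
class of the three order-2 subgroups, the class of the four order-3 subgroups, the unique
order-4 subgroup, and the whole group. -/
theorem alternatingGroup_fin4_five_conjugacy_classes_of_subgroups :
    Nat.card (Quotient (MulAction.orbitRel (ConjAct (alternatingGroup (Fin 4)))
      (Subgroup (alternatingGroup (Fin 4))))) = 5 := by
  rw [Subgroup.card_quotient_conjAct_eq_card_range_card
      fun _ _ => alternatingGroup.exists_conjAct_smul_eq_of_card_eq_fin_four,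
    alternatingGroup.range_card_subgroup_fin_four]
  simp
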